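/- arXiv:1112.0828 — 5 statements merged into one kernel-verified Lean document; each statement's English description precedes it below -/
import Mathlib

section
/- Let n ≥ 1 be an integer, let C₀ > 0 and c ≥ √(2(n+2)) be real numbers, and let V : ℝ → ℝ be a nondecreasing function with V(r) > 0 for all r ≥ c and V(r) → ∞ as r → ∞. Assume: (a) for every real t ≥ √(2(n+2)), V(t+1)/(t+1)^n − V(t)/t^n ≤ 2n·V(t+1)/(t+1)^(n+2); and (b) for every real t ≥ c with 0 < V(t+2) − V(t−1) < 1, one has (V(t+1) − V(t))·log(1/(V(t+2) − V(t−1))) ≤ C₀·(V(t+2) − V(t−1)). Then there exists a constant C > 0 such that V(r) ≥ C·r for all r ≥ c. -/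
/-!
From (a), after the powers of `t` are divided out, `V (t + 1) - V t ≤ 3 n V t / t` for large `t`;
so while `V` stays below `2 η t` the unit increments are at most `6 n η`. From (b), whenever the
three-step increment `S = V (t + 2) - V (t - 1)` is at most `exp (-6 C₀)`, the factor
`log (1 / S)` is at least `6 C₀`, so the middle increment `V (t + 1) - V t` is at most `S / 6`.
If `V t₀ < η t₀` at some large `t₀`, these two facts bound `V` on `t₀ + ℕ` by strong induction:
the middle increments telescope to at most half of the total and the three boundary increments
are `O(n η)`, so `V (t₀ + m)` never exceeds `V t₀ + exp (-6 C₀)`, contradicting `V → ∞`.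
-/

open Real Filter

lemma add_one_pow_mul_le {t : ℝ} (n : ℕ) (ht : 2 * n ≤ t) :
    (t + 1) ^ n * t ≤ t ^ n * (t + 2 * n) := by
  induction n with
  | zero => simp
  | succ n ih =>
    push_cast at ht ⊢
    have ht₀ : 0 ≤ t := by linarith [(Nat.cast_nonneg n : (0 : ℝ) ≤ n)]
    calc (t + 1) ^ (n + 1) * t = (t + 1) * ((t + 1) ^ n * t) := by ring
      _ ≤ (t + 1) * (t ^ n * (t + 2 * n)) := by
        have := ih (by linarith); gcongr
      _ ≤ t ^ (n + 1) * (t + 2 * (n + 1)) := by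
        have : (t + 1) * (t + 2 * n) ≤ t * (t + 2 * (n + 1)) := by nlinarith
        calc (t + 1) * (t ^ n * (t + 2 * n)) = t ^ n * ((t + 1) * (t + 2 * n)) := by ring
          _ ≤ t ^ n * (t * (t + 2 * (n + 1))) := by gcongr
          _ = _ := by ring

lemma sub_le_mul_div_of_div_pow_sub_div_pow_le {n : ℕ} {t a b : ℝ} (ht : 6 * n + 1 ≤ t)
    (ha : 0 ≤ a) (h : b / (t + 1) ^ n - a / t ^ n ≤ 2 * n * b / (t + 1) ^ (n + 2)) :
    b - a ≤ 3 * n * (a / t) := by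
  have hn : (0 : ℝ) ≤ n := n.cast_nonneg
  have ht₀ : 0 < t := by linarith
  have hQ : 0 < (t + 1) ^ n := by positivity
  have hR : 0 < (t + 1) ^ 2 - 2 * n := by nlinarith
  have hcleared : b * t ^ n * ((t + 1) ^ 2 - 2 * n) ≤ a * (t + 1) ^ n * (t + 1) ^ 2 := by
    rw [pow_add, sub_le_iff_le_add, div_le_iff₀ hQ] at h
    have := mul_le_mul_of_nonneg_right h (by positivity : 0 ≤ t ^ n * (t + 1) ^ 2)
    field_simp at this
    nlinarith
  have hmargin : (t + 2 * n) * (t + 1) ^ 2 ≤ (t + 3 * n) * ((t + 1) ^ 2 - 2 * n) := by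
    have : 6 * n ≤ t ^ 2 := by nlinarith
    nlinarith [mul_nonneg hn (by linarith : 0 ≤ t ^ 2 + 1 - 6 * n)]
  have hbt : b * t * (t ^ n * ((t + 1) ^ 2 - 2 * n))
      ≤ a * (t + 3 * n) * (t ^ n * ((t + 1) ^ 2 - 2 * n)) :=
    calc b * t * (t ^ n * ((t + 1) ^ 2 - 2 * n))
        = t * (b * t ^ n * ((t + 1) ^ 2 - 2 * n)) := by ring
      _ ≤ t * (a * (t + 1) ^ n * (t + 1) ^ 2) := by gcongr
      _ = a * (t + 1) ^ 2 * ((t + 1) ^ n * t) := by ring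
      _ ≤ a * (t + 1) ^ 2 * (t ^ n * (t + 2 * n)) :=
        mul_le_mul_of_nonneg_left (add_one_pow_mul_le n (by linarith)) (by positivity)
      _ = a * t ^ n * ((t + 2 * n) * (t + 1) ^ 2) := by ring
      _ ≤ a * t ^ n * ((t + 3 * n) * ((t + 1) ^ 2 - 2 * n)) := by gcongr
      _ = a * (t + 3 * n) * (t ^ n * ((t + 1) ^ 2 - 2 * n)) := by ring
  have hcancelled : b * t ≤ a * (t + 3 * n) := le_of_mul_le_mul_right hbt (by positivity)
  rw [← mul_div_assoc, le_div_iff₀ ht₀]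
  linarith

lemma mul_le_of_mul_log_one_div_le {C K d S : ℝ} (hC : 0 < C) (hK : 0 < K) (hd : 0 ≤ d)
    (hdS : d ≤ S) (hS : S ≤ exp (-(K * C)))
    (h : 0 < S → S < 1 → d * log (1 / S) ≤ C * S) : K * d ≤ S := by
  rcases (hd.trans hdS).eq_or_lt with hS₀ | hS₀
  · obtain rfl : d = 0 := by linarith
    simp [← hS₀]
  have hS₁ : S < 1 := hS.trans_lt (exp_lt_one_iff.2 (by nlinarith))
  have hlog : K * C ≤ log (1 / S) := by
    rw [le_log_iff_exp_le (by positivity), le_one_div (exp_pos _) hS₀, one_div, ← exp_neg]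
    exact hS
  have : C * (K * d) ≤ C * S :=
    calc C * (K * d) = K * C * d := by ring
      _ ≤ log (1 / S) * d := by gcongr
      _ = d * log (1 / S) := mul_comm _ _
      _ ≤ C * S := h hS₀ hS₁
  exact le_of_mul_le_mul_left this hC

lemma six_mul_sub_le_of_forall_le {f : ℕ → ℝ} {N : ℕ}
    (h : ∀ k ≤ N, 6 * (f (k + 2) - f (k + 1)) ≤ f (k + 3) - f k) :
    6 * (f (N + 2) - f 1) ≤ f (N + 1) + f (N + 2) + f (N + 3) - f 0 - f 1 - f 2 := by
  induction N with
  | zero =>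
    have := h 0 le_rfl
    simp only [zero_add] at this ⊢
    linarith
  | succ N ih =>
    have := h (N + 1) le_rfl
    have := ih fun k hk => h k (hk.trans N.le_succ)
    linarith

lemma Monotone.le_add_of_forall_sub_le {f : ℕ → ℝ} (hf : Monotone f) {δ ε : ℝ} (hδ : 0 ≤ δ)
    (hδε : 6 * δ ≤ ε) (hstep : ∀ k, f k ≤ f 0 + ε → f (k + 1) - f k ≤ δ)
    (hmid : ∀ k, f (k + 3) ≤ f 0 + ε → 6 * (f (k + 2) - f (k + 1)) ≤ f (k + 3) - f k)
    (m : ℕ) : f m ≤ f 0 + ε := by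
  induction m using Nat.strong_induction_on with
  | _ m ih =>
    have step (k : ℕ) (hk : k < m) : f (k + 1) - f k ≤ δ := hstep k (ih k hk)
    rcases lt_or_ge m 4 with hm | hm
    · interval_cases m
      · linarith
      · linarith [step 0 (by omega)]
      · linarith [step 0 (by omega), step 1 (by omega)]
      · linarith [step 0 (by omega), step 1 (by omega), step 2 (by omega)]
    · obtain ⟨N, rfl⟩ := Nat.exists_eq_add_of_le' hm
      have htel := six_mul_sub_le_of_forall_le (f := f) (N := N)
        fun k hk => hmid k (ih (k + 3) (by omega))
      have := ih (N + 3) (by omega)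
      have := step 0 (by omega)
      have := step (N + 2) (by omega)
      have := step (N + 3) (by omega)
      have := hf (show 0 ≤ 1 by omega)
      have := hf (show 0 ≤ 2 by omega)
      have := hf (show N + 1 ≤ N + 3 by omega)
      have := hf (show N + 2 ≤ N + 3 by omega)
      linarith

lemma Monotone.mul_le_of_tendsto_atTop {V : ℝ → ℝ} (hV : Monotone V)
    (hVinf : Tendsto V atTop atTop) {K η ε T : ℝ} (hK : 0 ≤ K) (hη : 0 < η) (hT : 0 < T)
    (hKε : 12 * K * η ≤ ε) (hεT : ε ≤ η * T)
    (hstep : ∀ t ≥ T, V (t + 1) - V t ≤ K * (V t / t))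
    (hmid : ∀ t ≥ T, V (t + 3) - V t ≤ ε → 6 * (V (t + 2) - V (t + 1)) ≤ V (t + 3) - V t) :
    ∀ r ≥ T, η * r ≤ V r := by
  intro t₀ ht₀
  by_contra! hlt
  set f : ℕ → ℝ := fun k => V (t₀ + k) with hf
  have hfmono : Monotone f := fun j k hjk => hV (by gcongr)
  have hf0 : f 0 = V t₀ := by simp [hf]
  have hfk (k : ℕ) : f k = V (t₀ + k) := rfl
  have hshift (k j : ℕ) : f (k + j) = V (t₀ + k + j) := by simp only [hf]; push_cast; ring_nf
  have hT_le (k : ℕ) : T ≤ t₀ + k := by linarith [(k.cast_nonneg : (0 : ℝ) ≤ k)]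
  have hstep' (k : ℕ) (hk : f k ≤ f 0 + ε) : f (k + 1) - f k ≤ 2 * K * η := by
    have hVt : V (t₀ + k) / (t₀ + k) ≤ 2 * η := by
      rw [div_le_iff₀ (by linarith [hT_le k]), ← hfk]
      linarith [mul_le_mul_of_nonneg_left (hT_le k) hη.le, mul_le_mul_of_nonneg_left ht₀ hη.le,
        mul_nonneg hη.le k.cast_nonneg]
    calc f (k + 1) - f k = V (t₀ + k + 1) - V (t₀ + k) := by rw [hshift, Nat.cast_one]
      _ ≤ K * (V (t₀ + k) / (t₀ + k)) := hstep _ (hT_le k)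
      _ ≤ 2 * K * η := by nlinarith
  have hmid' (k : ℕ) (hk : f (k + 3) ≤ f 0 + ε) :
      6 * (f (k + 2) - f (k + 1)) ≤ f (k + 3) - f k := by
    have h0k : f 0 ≤ f k := hfmono k.zero_le
    rw [hfk k] at h0k ⊢
    simp only [hshift, Nat.cast_ofNat, Nat.cast_one] at hk ⊢
    exact hmid _ (hT_le k) (by linarith)
  have hbounded := hfmono.le_add_of_forall_sub_le (by positivity) (by linarith) hstep' hmid'
  obtain ⟨m, hm⟩ := ((hVinf.comp (tendsto_atTop_add_const_left _ t₀
    tendsto_natCast_atTop_atTop)).eventually_gt_atTop (f 0 + ε)).exists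
  exact (hbounded m).not_gt hm

lemma Monotone.exists_pos_mul_le_of_forall_ge {V : ℝ → ℝ} (hV : Monotone V) {c T η : ℝ}
    (hc : 0 ≤ c) (hVc : 0 < V c) (hT : 0 < T) (hη : 0 < η) (h : ∀ r ≥ T, η * r ≤ V r) :
    ∃ C > 0, ∀ r ≥ c, C * r ≤ V r := by
  refine ⟨min η (V c / T), lt_min hη (div_pos hVc hT), fun r hr => ?_⟩
  rcases le_total T r with hTr | hrT
  · exact (mul_le_mul_of_nonneg_right (min_le_left _ _) (hc.trans hr)).trans (h r hTr)
  · calc min η (V c / T) * r ≤ V c / T * T := by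
          gcongr
          · exact hc.trans hr
          · exact min_le_right _ _
      _ = V c := div_mul_cancel₀ _ hT.ne'
      _ ≤ V r := hV hr

theorem linear_lower_volume_growth_general (n : ℕ) (C₀ c : ℝ) (hC₀ : 0 < C₀)
    (hc : Real.sqrt (2 * ((n : ℝ) + 2)) ≤ c)
    (V : ℝ → ℝ) (hVmono : Monotone V) (hVpos : ∀ r ≥ c, 0 < V r)
    (hVinf : Filter.Tendsto V Filter.atTop Filter.atTop)
    (ha : ∀ t ≥ Real.sqrt (2 * ((n : ℝ) + 2)),
      V (t + 1) / (t + 1) ^ n - V t / t ^ n ≤ 2 * n * V (t + 1) / (t + 1) ^ (n + 2))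
    (hb : ∀ t ≥ c, 0 < V (t + 2) - V (t - 1) → V (t + 2) - V (t - 1) < 1 →
      (V (t + 1) - V t) * Real.log (1 / (V (t + 2) - V (t - 1)))
        ≤ C₀ * (V (t + 2) - V (t - 1))) :
    ∃ C > (0 : ℝ), ∀ r ≥ c, C * r ≤ V r := by
  have hc₀ : 0 ≤ c := (Real.sqrt_nonneg _).trans hc
  -- the budget `ε = B η` covers the `36 n η` spent on boundary steps; `B ≤ T` keeps it below `η T`
  set ε : ℝ := exp (-(6 * C₀))
  set B : ℝ := 36 * n + 1
  set η : ℝ := ε / B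
  set T : ℝ := max c B
  have hη : 0 < η := by positivity
  have hcT : c ≤ T := le_max_left c B
  have hηB : η * B = ε := div_mul_cancel₀ ε (by positivity)
  have hKε : 12 * (3 * n) * η ≤ ε := by rw [← hηB]; simp only [B]; nlinarith
  have hεT : ε ≤ η * T := by rw [← hηB]; gcongr; exact le_max_right c B
  have hstep (t : ℝ) (ht : t ≥ T) : V (t + 1) - V t ≤ 3 * n * (V t / t) :=
    sub_le_mul_div_of_div_pow_sub_div_pow_le (by linarith [le_max_right c B])
      (hVpos t (by linarith)).le (ha t (by linarith))
  have hmid (t : ℝ) (ht : t ≥ T) (hS : V (t + 3) - V t ≤ ε) :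
      6 * (V (t + 2) - V (t + 1)) ≤ V (t + 3) - V t := by
    have hbt := hb (t + 1) (by linarith)
    rw [show t + 1 + 2 = t + 3 by ring, add_sub_cancel_right, show t + 1 + 1 = t + 2 by ring] at hbt
    exact mul_le_of_mul_log_one_div_le hC₀ (by norm_num) (sub_nonneg.2 (hVmono (by linarith)))
      (sub_le_sub (hVmono (by linarith)) (hVmono (by linarith))) hS hbt
  have hlinear := hVmono.mul_le_of_tendsto_atTop hVinf (by positivity) hη
    (by positivity) hKε hεT hstep hmid
  exact hVmono.exists_pos_mul_le_of_forall_ge hc₀ (hVpos c le_rfl) (by positivity) hη hlinear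

/-- Analytic core of Theorem 1.1: under the volume-ratio comparison (a) and the
log-Sobolev consequence (b), a nondecreasing, eventually positive `V` with
`V → ∞` has at least linear growth. -/
theorem linear_lower_volume_growth (n : ℕ) (hn : 1 ≤ n) (C₀ c : ℝ) (hC₀ : 0 < C₀)
    (hc : Real.sqrt (2 * ((n : ℝ) + 2)) ≤ c)
    (V : ℝ → ℝ) (hVmono : Monotone V) (hVpos : ∀ r ≥ c, 0 < V r)
    (hVinf : Filter.Tendsto V Filter.atTop Filter.atTop)
    (ha : ∀ t ≥ Real.sqrt (2 * ((n : ℝ) + 2)),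
      V (t + 1) / (t + 1) ^ n - V t / t ^ n ≤ 2 * n * V (t + 1) / (t + 1) ^ (n + 2))
    (hb : ∀ t ≥ c, 0 < V (t + 2) - V (t - 1) → V (t + 2) - V (t - 1) < 1 →
      (V (t + 1) - V t) * Real.log (1 / (V (t + 2) - V (t - 1)))
        ≤ C₀ * (V (t + 2) - V (t - 1))) :
    ∃ C > (0 : ℝ), ∀ r ≥ c, C * r ≤ V r :=
  linear_lower_volume_growth_general n C₀ c hC₀ hc V hVmono hVpos hVinf ha hb
end

section
/- Let n ≥ 1 be an integer and set r₀ := √(2(n+2)). Let V, η : ℝ → ℝ be continuously differentiable on [r₀, ∞), with η nonnegative and nondecreasing on [r₀, ∞). Assume that for all r ≥ r₀: (i) n·V(r) − r·V′(r) = 2·η(r) − (4/r)·η′(r), and (ii) η(r) ≤ (n/2)·V(r). Then for all r₁ > r₂ ≥ r₀, V(r₁)/r₁^n − V(r₂)/r₂^n ≤ 2n·V(r₁)/r₁^(n+2). -/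
/-! The quantity `V r / r ^ n - 4 η r / r ^ (n + 2)` has, by identity (i), derivative
`2 η r (2 (n + 2) - r ^ 2) / r ^ (n + 3)`, in which the `η'` terms cancel. This is
nonpositive for `η ≥ 0` and `r ≥ √(2 (n + 2))`, so the quantity is nonincreasing there.
Comparing its values at `r₂ < r₁`, dropping the nonnegative `η r₂` term and bounding
`η r₁` by (ii) gives the claim. -/

open Set

theorem HasDerivAt.div_pow_self {f : ℝ → ℝ} {f' x : ℝ} (hf : HasDerivAt f f' x)
    (hx : x ≠ 0) (k : ℕ) :
    HasDerivAt (fun y => f y / y ^ k) ((f' * x - k * f x) / x ^ (k + 1)) x := by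
  refine (hf.div (hasDerivAt_pow k x) (pow_ne_zero k hx)).congr_deriv ?_
  rcases k with _ | k
  · simp [hx]
  · field_simp
    push_cast
    ring

theorem hasDerivAt_volume_ratio_sub {n : ℕ} {V η : ℝ → ℝ} {v e r : ℝ} (hr : r ≠ 0)
    (hV : HasDerivAt V v r) (hη : HasDerivAt η e r)
    (hi : n * V r - r * v = 2 * η r - 4 / r * e) :
    HasDerivAt (fun s => V s / s ^ n - 4 * η s / s ^ (n + 2))
      (2 * η r * (2 * (n + 2) - r ^ 2) / r ^ (n + 3)) r := by
  refine ((hV.div_pow_self hr n).sub ((hη.const_mul 4).div_pow_self hr (n + 2))).congr_deriv ?_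
  field_simp at hi ⊢
  push_cast
  linear_combination (-r ^ (n + 2)) * hi

theorem antitoneOn_volume_ratio_sub {n : ℕ} {V η V' η' : ℝ → ℝ} {a : ℝ}
    (ha : √(2 * ((n : ℝ) + 2)) ≤ a)
    (hV : ∀ r ∈ Ici a, HasDerivAt V (V' r) r) (hη : ∀ r ∈ Ici a, HasDerivAt η (η' r) r)
    (hηnn : ∀ r ∈ Ici a, 0 ≤ η r)
    (hi : ∀ r ∈ Ici a, (n : ℝ) * V r - r * V' r = 2 * η r - (4 / r) * η' r) :
    AntitoneOn (fun s => V s / s ^ n - 4 * η s / s ^ (n + 2)) (Ici a) := by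
  have hpos : ∀ r ∈ Ici a, 0 < r := fun r hr =>
    lt_of_lt_of_le (Real.sqrt_pos.2 (by positivity)) (ha.trans hr)
  have hderiv : ∀ r ∈ Ici a, HasDerivAt (fun s => V s / s ^ n - 4 * η s / s ^ (n + 2))
      (2 * η r * (2 * (n + 2) - r ^ 2) / r ^ (n + 3)) r := fun r hr =>
    hasDerivAt_volume_ratio_sub (hpos r hr).ne' (hV r hr) (hη r hr) (hi r hr)
  refine antitoneOn_of_hasDerivWithinAt_nonpos (convex_Ici a)
    (fun r hr => (hderiv r hr).continuousAt.continuousWithinAt)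
    (fun r hr => (hderiv r (interior_subset hr)).hasDerivWithinAt) fun r hr => ?_
  replace hr : r ∈ Ici a := interior_subset hr
  have hr_pos := hpos r hr
  have hr_sq : 2 * ((n : ℝ) + 2) ≤ r ^ 2 := (Real.sqrt_le_left hr_pos.le).1 (ha.trans hr)
  have hηr := hηnn r hr
  exact div_nonpos_of_nonpos_of_nonneg (by nlinarith) (by positivity)

theorem volume_ratio_comparison_general (n : ℕ) (V η V' η' : ℝ → ℝ)
    (hV : ∀ r ∈ Set.Ici (Real.sqrt (2 * ((n : ℝ) + 2))), HasDerivAt V (V' r) r)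
    (hη : ∀ r ∈ Set.Ici (Real.sqrt (2 * ((n : ℝ) + 2))), HasDerivAt η (η' r) r)
    (hηnn : ∀ r ∈ Set.Ici (Real.sqrt (2 * ((n : ℝ) + 2))), 0 ≤ η r)
    (hi : ∀ r ≥ Real.sqrt (2 * ((n : ℝ) + 2)),
      (n : ℝ) * V r - r * V' r = 2 * η r - (4 / r) * η' r)
    (hii : ∀ r ≥ Real.sqrt (2 * ((n : ℝ) + 2)), η r ≤ ((n : ℝ) / 2) * V r) :
    ∀ r₁ r₂ : ℝ, Real.sqrt (2 * ((n : ℝ) + 2)) ≤ r₂ → r₂ < r₁ →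
      V r₁ / r₁ ^ n - V r₂ / r₂ ^ n ≤ 2 * n * V r₁ / r₁ ^ (n + 2) := by
  intro r₁ r₂ hr₂ hlt
  have hr₁ : Real.sqrt (2 * ((n : ℝ) + 2)) ≤ r₁ := hr₂.trans hlt.le
  have hr₁_pos : 0 < r₁ := (Real.sqrt_nonneg _).trans_lt (hr₂.trans_lt hlt)
  have hanti := antitoneOn_volume_ratio_sub le_rfl hV hη hηnn hi hr₂ hr₁ hlt.le
  have hη₂ : 0 ≤ 4 * η r₂ / r₂ ^ (n + 2) :=
    div_nonneg (mul_nonneg zero_le_four (hηnn r₂ hr₂))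
      (pow_nonneg ((Real.sqrt_nonneg _).trans hr₂) _)
  have hη₁ : 4 * η r₁ / r₁ ^ (n + 2) ≤ 2 * n * V r₁ / r₁ ^ (n + 2) :=
    div_le_div_of_nonneg_right (by linarith [hii r₁ hr₁]) (by positivity)
  simp only at hanti
  linarith

/-- Lemma 2.2: the volume-ratio comparison for self-shrinkers, from the
identity (i) of Lemma 2.1 and the average mean-curvature bound (ii). -/
theorem volume_ratio_comparison (n : ℕ) (hn : 1 ≤ n) (V η V' η' : ℝ → ℝ)
    (hV : ∀ r ∈ Set.Ici (Real.sqrt (2 * ((n : ℝ) + 2))), HasDerivAt V (V' r) r)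
    (hV'cont : ContinuousOn V' (Set.Ici (Real.sqrt (2 * ((n : ℝ) + 2)))))
    (hη : ∀ r ∈ Set.Ici (Real.sqrt (2 * ((n : ℝ) + 2))), HasDerivAt η (η' r) r)
    (hη'cont : ContinuousOn η' (Set.Ici (Real.sqrt (2 * ((n : ℝ) + 2)))))
    (hηnn : ∀ r ∈ Set.Ici (Real.sqrt (2 * ((n : ℝ) + 2))), 0 ≤ η r)
    (hηmono : MonotoneOn η (Set.Ici (Real.sqrt (2 * ((n : ℝ) + 2)))))
    (hi : ∀ r ≥ Real.sqrt (2 * ((n : ℝ) + 2)),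
      (n : ℝ) * V r - r * V' r = 2 * η r - (4 / r) * η' r)
    (hii : ∀ r ≥ Real.sqrt (2 * ((n : ℝ) + 2)), η r ≤ ((n : ℝ) / 2) * V r) :
    ∀ r₁ r₂ : ℝ, Real.sqrt (2 * ((n : ℝ) + 2)) ≤ r₂ → r₂ < r₁ →
      V r₁ / r₁ ^ n - V r₂ / r₂ ^ n ≤ 2 * n * V r₁ / r₁ ^ (n + 2) :=
  volume_ratio_comparison_general n V η V' η' hV hη hηnn hi hii
end

section
/- Let n ≥ 1 be an integer, C > 0 and r > 0 real numbers, and let V : (0, r] → ℝ be a positive differentiable function satisfying V′(s)/V(s) ≥ n/s − C/r for all s ∈ (0, r]. If lim_{ε→0⁺} V(ε)/ε^n = ω_n, where ω_n is the volume of the unit ball in ℝ^n, then V(r) ≥ ω_n·e^{−C}·r^n. -/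
/-!
Along `(0, r]` the quantity `log V(s) - n log s + C s / r` has nonnegative derivative by the
differential inequality, so `V(s) / s ^ n * exp (C s / r)` is nondecreasing. As `s → 0⁺` it tends
to `ω_n`, hence `ω_n ≤ V(r) / r ^ n * exp C`.
-/

open Set Filter Topology Real

theorem MonotoneOn.le_of_tendsto_nhdsGT {f : ℝ → ℝ} {a b L : ℝ} (hf : MonotoneOn f (Ioc a b))
    (hab : a < b) (hL : Tendsto f (𝓝[>] a) (𝓝 L)) : L ≤ f b :=
  le_of_tendsto hL <| by
    filter_upwards [Ioc_mem_nhdsGT hab] with s hs using hf hs (right_mem_Ioc.2 hab) hs.2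

theorem monotoneOn_div_pow_mul_exp {V V' : ℝ → ℝ} {n : ℕ} {c r : ℝ}
    (hVpos : ∀ s ∈ Ioc 0 r, 0 < V s) (hderiv : ∀ s ∈ Ioc 0 r, HasDerivAt V (V' s) s)
    (hineq : ∀ s ∈ Ioc 0 r, n / s - c ≤ V' s / V s) :
    MonotoneOn (fun s => V s / s ^ n * exp (c * s)) (Ioc 0 r) := by
  set g : ℝ → ℝ := fun s => log (V s) - n * log s + c * s
  have hg : ∀ s ∈ Ioc 0 r, HasDerivAt g (V' s / V s - n * s⁻¹ + c) s := fun s hs =>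
    (((hderiv s hs).log (hVpos s hs).ne').sub
      ((hasDerivAt_log hs.1.ne').const_mul _)).add (by simpa using (hasDerivAt_id s).const_mul c)
  have hg_mono : MonotoneOn g (Ioc 0 r) := by
    refine monotoneOn_of_hasDerivWithinAt_nonneg (convex_Ioc 0 r)
      (fun s hs => (hg s hs).continuousAt.continuousWithinAt)
      (fun s hs => (hg s (interior_subset hs)).hasDerivWithinAt) fun s hs => ?_
    have := hineq s (interior_subset hs)
    rw [← div_eq_mul_inv]
    linarith
  refine (exp_monotone.comp_monotoneOn hg_mono).congr fun s hs => ?_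
  simp only [Function.comp_apply, g, exp_add, exp_sub, exp_log (hVpos s hs), exp_nat_mul,
    exp_log hs.1]

theorem ball_volume_lower_bound_general (n : ℕ) (C r : ℝ) (hr : 0 < r)
    (V V' : ℝ → ℝ)
    (hVpos : ∀ s ∈ Set.Ioc (0 : ℝ) r, 0 < V s)
    (hderiv : ∀ s ∈ Set.Ioc (0 : ℝ) r, HasDerivAt V (V' s) s)
    (hineq : ∀ s ∈ Set.Ioc (0 : ℝ) r, V' s / V s ≥ (n : ℝ) / s - C / r)
    (hlim : Filter.Tendsto (fun ε => V ε / ε ^ n) (nhdsWithin 0 (Set.Ioi 0))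
      (nhds ((MeasureTheory.volume (Metric.ball (0 : EuclideanSpace ℝ (Fin n)) 1)).toReal))) :
    V r ≥ (MeasureTheory.volume (Metric.ball (0 : EuclideanSpace ℝ (Fin n)) 1)).toReal
      * Real.exp (-C) * r ^ n := by
  set ω := (MeasureTheory.volume (Metric.ball (0 : EuclideanSpace ℝ (Fin n)) 1)).toReal
  have hexp : Tendsto (fun s => exp (C / r * s)) (𝓝[>] 0) (𝓝 1) := by
    simpa using ((continuous_const.mul continuous_id).rexp.tendsto 0).mono_left nhdsWithin_le_nhds
  have hω : ω ≤ V r / r ^ n * exp C := by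
    simpa [div_mul_cancel₀ C hr.ne'] using
      (monotoneOn_div_pow_mul_exp hVpos hderiv hineq).le_of_tendsto_nhdsGT hr
        (by simpa using hlim.mul hexp)
  calc ω * exp (-C) * r ^ n ≤ V r / r ^ n * exp C * exp (-C) * r ^ n := by gcongr
    _ = V r := by
      field_simp
      rw [mul_assoc, ← exp_add, add_neg_cancel, exp_zero, mul_one]

/-- Analytic core of Lemma 3.1: a logarithmic differential inequality together
with Euclidean density of small balls forces `V r ≥ ω_n e^{-C} r^n`. -/
theorem ball_volume_lower_bound (n : ℕ) (hn : 1 ≤ n) (C r : ℝ) (hC : 0 < C) (hr : 0 < r)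
    (V V' : ℝ → ℝ)
    (hVpos : ∀ s ∈ Set.Ioc (0 : ℝ) r, 0 < V s)
    (hderiv : ∀ s ∈ Set.Ioc (0 : ℝ) r, HasDerivAt V (V' s) s)
    (hineq : ∀ s ∈ Set.Ioc (0 : ℝ) r, V' s / V s ≥ (n : ℝ) / s - C / r)
    (hlim : Filter.Tendsto (fun ε => V ε / ε ^ n) (nhdsWithin 0 (Set.Ioi 0))
      (nhds ((MeasureTheory.volume (Metric.ball (0 : EuclideanSpace ℝ (Fin n)) 1)).toReal))) :
    V r ≥ (MeasureTheory.volume (Metric.ball (0 : EuclideanSpace ℝ (Fin n)) 1)).toReal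
      * Real.exp (-C) * r ^ n :=
  ball_volume_lower_bound_general n C r hr V V' hVpos hderiv hineq hlim
end

section
/- Let V : ℕ → ℝ be a nonnegative nondecreasing function, let r and k be natural numbers with 1 ≤ r ≤ k, and let C₀ and L be real numbers with 0 < 6·C₀ < L. Assume that for every integer t with r ≤ t ≤ k, one has (V(t+1) − V(t))·L ≤ C₀·(V(t+2) − V(t−1)), and assume V(k+2) ≤ 2·V(k+1). Then V(k+1) ≤ V(r)·L/(L − 6·C₀). -/
/-- The summation/iteration step in the proof of Theorem 1.1. -/
theorem iteration_step (V : ℕ → ℝ) (hVnn : ∀ k, 0 ≤ V k) (hVmono : Monotone V)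
    (r k : ℕ) (hr : 1 ≤ r) (hrk : r ≤ k) (C₀ L : ℝ)
    (hC₀ : 0 < 6 * C₀) (hL : 6 * C₀ < L)
    (hstep : ∀ t : ℕ, r ≤ t → t ≤ k →
      (V (t + 1) - V t) * L ≤ C₀ * (V (t + 2) - V (t - 1)))
    (hdouble : V (k + 2) ≤ 2 * V (k + 1)) :
    V (k + 1) ≤ V r * L / (L - 6 * C₀) := by
  have hC₀pos : 0 < C₀ := by linarith
  -- summed telescoping inequality by induction
  have key : ∀ m : ℕ, r ≤ m → m ≤ k →
      (V (m + 1) - V r) * L ≤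
        C₀ * ((V (m + 2) - V (r + 1)) + (V (m + 1) - V r) + (V m - V (r - 1))) := by
    intro m hm
    induction m, hm using Nat.le_induction with
    | base =>
      intro hrk'
      have h := hstep r le_rfl hrk'
      have : (V (r + 2) - V (r - 1)) =
          (V (r + 2) - V (r + 1)) + (V (r + 1) - V r) + (V r - V (r - 1)) := by ring
      linarith [h, this ▸ h]
    | succ m hm ih =>
      intro hmk
      have ih' := ih (le_trans (Nat.le_succ m) hmk)
      have h := hstep (m + 1) (le_trans hm (Nat.le_succ m)) hmk
      have he : (m + 1 : ℕ) - 1 = m := rfl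
      rw [he] at h
      have : (m + 1) + 2 = m + 3 := rfl
      nlinarith [h, ih']
  have hkey := key k hrk le_rfl
  have h1 : V (r + 1) ≥ 0 := hVnn _
  have h2 : V (r - 1) ≥ 0 := hVnn _
  have h3 : V r ≥ 0 := hVnn _
  have h4 : V k ≤ V (k + 1) := hVmono (Nat.le_succ k)
  have h5 : V (k + 1) ≤ V (k + 2) := hVmono (by omega)
  have hmain : (V (k + 1) - V r) * L ≤ 6 * C₀ * V (k + 1) := by
    nlinarith [hkey, hC₀pos]
  have hden : 0 < L - 6 * C₀ := by linarith
  rw [le_div_iff₀ hden]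
  nlinarith [hmain]
end

section
/- Let n ≥ 1 be an integer, κ > 0 a real number, k₀ a natural number, and let a : ℕ → ℝ be a nonnegative function with Σ_{k=0}^{∞} a(k) < ∞ and a(K) ≥ κ·2^(2K−1)·2^(−nK) for all K ≥ k₀. For natural numbers k₁ ≤ k₂ define S(k₁, k₂) := Σ_{k=k₁}^{k₂−1} a(k). Then for every ε > 0 there exist natural numbers k₁ and k₂ with k₀ ≤ k₁ and k₁ + 4 ≤ k₂ such that S(k₁, k₂) ≤ ε and S(k₁, k₂) ≤ 2^(4n)·S(k₁+2, k₂−2). -/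
/-!
If the doubling inequality `S(k₁, k₂) ≤ 2^(4n) S(k₁ + 2, k₂ - 2)` failed for each of the `q`
nested windows `[2q + 2j, 6q + 1 - 2j)`, `j < q`, then iterating the failure would give
`(2^(4n))^q a(4q) < S(2q, 6q + 1) ≤ ∑ a`. The lower bound on `a(4q)` makes the left side at least
`κ 2^(8q) / 2`, which exceeds `∑ a` once `q` is large. For such `q` one window satisfies the
doubling inequality, and all windows lie in the tail beyond `q`, whose sum is eventually `< ε`.
-/

open Filter Finset

theorem exists_le_mul_succ_of_lt_pow_mul {b : ℕ → ℝ} {c : ℝ} (hc : 0 ≤ c) {m : ℕ}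
    (h : b 0 < c ^ m * b m) : ∃ j < m, b j ≤ c * b (j + 1) := by
  by_contra! hdesc
  have hiter : ∀ j ≤ m, c ^ j * b j ≤ b 0 := by
    intro j
    induction j with
    | zero => simp
    | succ j ih =>
      intro hj
      calc c ^ (j + 1) * b (j + 1) = c ^ j * (c * b (j + 1)) := by ring
        _ ≤ c ^ j * b j := by gcongr; exact (hdesc j (by omega)).le
        _ ≤ b 0 := ih (by omega)
  exact (hiter m le_rfl).not_gt h

theorem exists_sum_Ico_le_mul_sum_Ico_inner {a : ℕ → ℝ} {c : ℝ} (hc : 0 ≤ c) {k m : ℕ}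
    (h : ∑ i ∈ Ico k (k + 4 * m + 1), a i < c ^ m * a (k + 2 * m)) :
    ∃ j < m, ∑ i ∈ Ico (k + 2 * j) (k + 4 * m + 1 - 2 * j), a i ≤
      c * ∑ i ∈ Ico (k + 2 * j + 2) (k + 4 * m + 1 - 2 * j - 2), a i := by
  set b : ℕ → ℝ := fun j ↦ ∑ i ∈ Ico (k + 2 * j) (k + 4 * m + 1 - 2 * j), a i
  have hb₀ : b 0 = ∑ i ∈ Ico k (k + 4 * m + 1), a i := by simp [b]
  have hbm : b m = a (k + 2 * m) := by
    simp only [b, show k + 4 * m + 1 - 2 * m = k + 2 * m + 1 by omega,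
      Nat.Ico_succ_singleton, sum_singleton]
  obtain ⟨j, hj, hb⟩ := exists_le_mul_succ_of_lt_pow_mul hc (b := b) (hb₀ ▸ hbm ▸ h)
  refine ⟨j, hj, ?_⟩
  convert hb using 4 <;> omega

theorem sum_Ico_le_tsum_nat_add {a : ℕ → ℝ} (ha : ∀ i, 0 ≤ a i) (hs : Summable a) {k k₁ : ℕ}
    (hk : k ≤ k₁) (k₂ : ℕ) : ∑ i ∈ Ico k₁ k₂, a i ≤ ∑' i, a (i + k) := by
  calc ∑ i ∈ Ico k₁ k₂, a i ≤ ∑ i ∈ Ico k k₂, a i :=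
        sum_le_sum_of_subset_of_nonneg (Ico_subset_Ico hk le_rfl) fun i _ _ ↦ ha i
    _ = ∑ i ∈ range (k₂ - k), a (i + k) := by
        rw [sum_Ico_eq_sum_range]; simp only [add_comm k]
    _ ≤ ∑' i, a (i + k) :=
        ((summable_nat_add_iff k).mpr hs).sum_le_tsum _ fun i _ ↦ ha (i + k)

theorem two_pow_pow_mul_two_rpow_mul_two_rpow (n q : ℕ) (κ : ℝ) :
    ((2 : ℝ) ^ (4 * n)) ^ q * (κ * (2 : ℝ) ^ (2 * ((4 * q : ℕ) : ℝ) - 1) *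
      (2 : ℝ) ^ (-(n : ℝ) * ((4 * q : ℕ) : ℝ))) = κ / 2 * (2 ^ 8) ^ q := by
  have hgrowth : (2 : ℝ) ^ (2 * ((4 * q : ℕ) : ℝ) - 1) = (2 ^ 8) ^ q / 2 := by
    rw [Real.rpow_sub two_pos, Real.rpow_one, ← pow_mul,
      show 2 * ((4 * q : ℕ) : ℝ) = ((8 * q : ℕ) : ℝ) by push_cast; ring, Real.rpow_natCast]
  have hdecay : (2 : ℝ) ^ (-(n : ℝ) * ((4 * q : ℕ) : ℝ)) = (((2 : ℝ) ^ (4 * n)) ^ q)⁻¹ := by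
    rw [neg_mul, Real.rpow_neg zero_le_two, ← Nat.cast_mul, Real.rpow_natCast, ← pow_mul,
      show n * (4 * q) = 4 * n * q by ring]
  rw [hgrowth, hdecay]
  field_simp

theorem annulus_selection_general (n : ℕ) (κ : ℝ) (hκ : 0 < κ) (k₀ : ℕ)
    (a : ℕ → ℝ) (hann : ∀ k, 0 ≤ a k) (hsum : Summable a)
    (hlow : ∀ K : ℕ, k₀ ≤ K →
      κ * (2 : ℝ) ^ (2 * (K : ℝ) - 1) * (2 : ℝ) ^ (-(n : ℝ) * (K : ℝ)) ≤ a K) :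
    ∀ ε > (0 : ℝ), ∃ k₁ k₂ : ℕ, k₀ ≤ k₁ ∧ k₁ + 4 ≤ k₂ ∧
      (∑ k ∈ Finset.Ico k₁ k₂, a k) ≤ ε ∧
      (∑ k ∈ Finset.Ico k₁ k₂, a k)
        ≤ 2 ^ (4 * n) * ∑ k ∈ Finset.Ico (k₁ + 2) (k₂ - 2), a k := by
  intro ε hε
  have hbig : ∀ᶠ q in atTop, ∑' k, a k < κ / 2 * (2 ^ 8) ^ q :=
    ((tendsto_pow_atTop_atTop_of_one_lt (by norm_num)).const_mul_atTop
      (half_pos hκ)).eventually_gt_atTop _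
  have htail : ∀ᶠ q in atTop, ∑' k, a (k + q) < ε :=
    (tendsto_sum_nat_add a).eventually_lt_const hε
  obtain ⟨q, hq, hqbig, hqtail⟩ := ((eventually_ge_atTop k₀).and (hbig.and htail)).exists
  have hinner : ∑ i ∈ Ico (2 * q) (2 * q + 4 * q + 1), a i <
      ((2 : ℝ) ^ (4 * n)) ^ q * a (2 * q + 2 * q) := calc
    _ ≤ ∑' k, a k := hsum.sum_le_tsum _ fun i _ ↦ hann i
    _ < κ / 2 * (2 ^ 8) ^ q := hqbig
    _ ≤ ((2 : ℝ) ^ (4 * n)) ^ q * a (4 * q) := by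
        rw [← two_pow_pow_mul_two_rpow_mul_two_rpow n q κ]
        gcongr
        exact hlow _ (by omega)
    _ = ((2 : ℝ) ^ (4 * n)) ^ q * a (2 * q + 2 * q) := by ring_nf
  obtain ⟨j, hj, hdoubling⟩ := exists_sum_Ico_le_mul_sum_Ico_inner (by positivity) hinner
  refine ⟨2 * q + 2 * j, 2 * q + 4 * q + 1 - 2 * j, by omega, by omega, ?_, hdoubling⟩
  exact (sum_Ico_le_tsum_nat_add hann hsum (by omega) _).trans hqtail.le

/-- The combinatorial selection argument in the proof of Lemma 3.2 (adapted
from Cao–Zhu): annuli with small total volume and controlled doubling can be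
selected. -/
theorem annulus_selection (n : ℕ) (hn : 1 ≤ n) (κ : ℝ) (hκ : 0 < κ) (k₀ : ℕ)
    (a : ℕ → ℝ) (hann : ∀ k, 0 ≤ a k) (hsum : Summable a)
    (hlow : ∀ K : ℕ, k₀ ≤ K →
      κ * (2 : ℝ) ^ (2 * (K : ℝ) - 1) * (2 : ℝ) ^ (-(n : ℝ) * (K : ℝ)) ≤ a K) :
    ∀ ε > (0 : ℝ), ∃ k₁ k₂ : ℕ, k₀ ≤ k₁ ∧ k₁ + 4 ≤ k₂ ∧
      (∑ k ∈ Finset.Ico k₁ k₂, a k) ≤ ε ∧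
      (∑ k ∈ Finset.Ico k₁ k₂, a k)
        ≤ 2 ^ (4 * n) * ∑ k ∈ Finset.Ico (k₁ + 2) (k₂ - 2), a k :=
  annulus_selection_general n κ hκ k₀ a hann hsum hlow
end
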